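/- arXiv:1910.14378 — 2 statements merged into one kernel-verified Lean document; each statement's English description precedes it below -/
import Mathlib

section
/- Quasi-optimality of the sketched minimal residual projection: suppose u_r ∈ U_r satisfies ‖r(u_r)‖_{U'}^Θ = min_{w ∈ U_r} ‖r(w)‖_{U'}^Θ and ζ_r^Θ > 0. Then ‖u − u_r‖_U ≤ (ι_r^Θ/ζ_r^Θ) · ‖u − P_{U_r} u‖_U. -/
open Matrix
open scoped ComplexOrder

noncomputable section

variable {𝕂 : Type*} [RCLike 𝕂]

/-- Canonical ℓ2 inner product on `𝕂^n` (conjugate-linear in the first argument). -/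
def ip2 {n : ℕ} (x y : Fin n → 𝕂) : 𝕂 := star x ⬝ᵥ y

/-- Canonical ℓ2 norm on `𝕂^n`. -/
def norm2 {n : ℕ} (x : Fin n → 𝕂) : ℝ := Real.sqrt (RCLike.re (ip2 x x))

/-- Inner product `⟨x,y⟩_U := ⟨R x, y⟩` on `U = 𝕂^n`. -/
def ipU {n : ℕ} (R : Matrix (Fin n) (Fin n) 𝕂) (x y : Fin n → 𝕂) : 𝕂 := ip2 (R *ᵥ x) y

/-- Norm `‖·‖_U` associated with `⟨·,·⟩_U`. -/
def normU {n : ℕ} (R : Matrix (Fin n) (Fin n) 𝕂) (x : Fin n → 𝕂) : ℝ :=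
  Real.sqrt (RCLike.re (ipU R x x))

/-- Dual inner product `⟨x,y⟩_{U'} := ⟨x, R⁻¹ y⟩` on `U' = 𝕂^n`. -/
def ipDual {n : ℕ} (R : Matrix (Fin n) (Fin n) 𝕂) (x y : Fin n → 𝕂) : 𝕂 := ip2 x (R⁻¹ *ᵥ y)

/-- Dual norm `‖·‖_{U'}`. -/
def normDual {n : ℕ} (R : Matrix (Fin n) (Fin n) 𝕂) (x : Fin n → 𝕂) : ℝ :=
  Real.sqrt (RCLike.re (ipDual R x x))

/-- Sketched semi-inner product `⟨x,y⟩_U^Θ := ⟨Θ x, Θ y⟩`. -/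
def ipUS {n k : ℕ} (Θ : Matrix (Fin k) (Fin n) 𝕂) (x y : Fin n → 𝕂) : 𝕂 :=
  ip2 (Θ *ᵥ x) (Θ *ᵥ y)

/-- Sketched seminorm `‖·‖_U^Θ`. -/
def normUS {n k : ℕ} (Θ : Matrix (Fin k) (Fin n) 𝕂) (x : Fin n → 𝕂) : ℝ :=
  Real.sqrt (RCLike.re (ipUS Θ x x))

/-- Sketched dual seminorm `‖x‖_{U'}^Θ = ‖Θ R⁻¹ x‖`. -/
def normDualS {n k : ℕ} (Θ : Matrix (Fin k) (Fin n) 𝕂) (R : Matrix (Fin n) (Fin n) 𝕂)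
    (x : Fin n → 𝕂) : ℝ :=
  normUS Θ (R⁻¹ *ᵥ x)

/-- `Θ` is an `ε`-embedding for the subspace `V` of `U`. -/
def IsEmb {n k : ℕ} (R : Matrix (Fin n) (Fin n) 𝕂) (Θ : Matrix (Fin k) (Fin n) 𝕂)
    (V : Submodule 𝕂 (Fin n → 𝕂)) (ε : ℝ) : Prop :=
  ∀ x ∈ V, ∀ y ∈ V, ‖ipU R x y - ipUS Θ x y‖ ≤ ε * normU R x * normU R y

/-- Distance (in `‖·‖_U`) from `v` to the subspace `W`; equals `‖v - P_W v‖_U`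
where `P_W` is the `⟨·,·⟩_U`-orthogonal projection onto `W`. -/
def distU {n : ℕ} (R : Matrix (Fin n) (Fin n) 𝕂) (v : Fin n → 𝕂)
    (W : Submodule 𝕂 (Fin n → 𝕂)) : ℝ :=
  sInf {t | ∃ w ∈ W, t = normU R (v - w)}

/-- Set of ratios `num x / den x` over nonzero `x ∈ S`. -/
def ratioSet {n : ℕ} (S : Submodule 𝕂 (Fin n → 𝕂)) (num den : (Fin n → 𝕂) → ℝ) : Set ℝ :=
  {t | ∃ x ∈ S, x ≠ 0 ∧ t = num x / den x}

/-- Library `L_r(D)` of all subspaces spanned by `r` vectors from the dictionary `D`. -/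
def LrD {n : ℕ} (D : Finset (Fin n → 𝕂)) (r : ℕ) : Set (Submodule 𝕂 (Fin n → 𝕂)) :=
  {W | ∃ S : Finset (Fin n → 𝕂), S ⊆ D ∧ S.card = r ∧
    W = Submodule.span 𝕂 (S : Set (Fin n → 𝕂))}

/-- Set of ratios `num x / den x` over nonzero `x ∈ span{u} + W` with `W ∈ L_r(D)`. -/
def dictRatioSet {n : ℕ} (D : Finset (Fin n → 𝕂)) (r : ℕ) (u : Fin n → 𝕂)
    (num den : (Fin n → 𝕂) → ℝ) : Set ℝ :=
  {t | ∃ W ∈ LrD D r, ∃ x ∈ Submodule.span 𝕂 {u} ⊔ W, x ≠ 0 ∧ t = num x / den x}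

/-- The subspace `R_r(U_r) = span {R⁻¹ (b - A x) : x ∈ U_r}`. -/
def RrSub {n : ℕ} (R A : Matrix (Fin n) (Fin n) 𝕂) (b : Fin n → 𝕂)
    (Ur : Submodule 𝕂 (Fin n → 𝕂)) : Submodule 𝕂 (Fin n → 𝕂) :=
  Submodule.span 𝕂 {v | ∃ x ∈ Ur, v = R⁻¹ *ᵥ (b - A *ᵥ x)}

/-- Dictionary-based `r`-width `σ_r(M; K)`. -/
def sigmaW {n : ℕ} (R : Matrix (Fin n) (Fin n) 𝕂) (M : Set (Fin n → 𝕂)) (r K : ℕ) : ℝ :=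
  sInf {t | ∃ D : Finset (Fin n → 𝕂), D.card = K ∧
    t = sSup {s | ∃ v ∈ M, s = sInf {e | ∃ W ∈ LrD D r, e = distU R v W}}}

/-- Nonlinear Kolmogorov `r`-width `d_r(M; m)` with a library of `m` subspaces. -/
def dW {n : ℕ} (R : Matrix (Fin n) (Fin n) 𝕂) (M : Set (Fin n → 𝕂)) (r m : ℕ) : ℝ :=
  sInf {t | ∃ L : Finset (Submodule 𝕂 (Fin n → 𝕂)), L.card = m ∧
    (∀ W ∈ L, Module.finrank 𝕂 ↥W ≤ r) ∧
    t = sSup {s | ∃ v ∈ M, s = sInf {e | ∃ W ∈ L, e = distU R v W}}}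

/-- A posteriori estimator `ω̄` of the embedding constant of `Θ` for `V`,
computed from a second embedding `Θs`. -/
def omegaBar {n k ks : ℕ} (ε : ℝ) (Θ : Matrix (Fin k) (Fin n) 𝕂)
    (Θs : Matrix (Fin ks) (Fin n) 𝕂) (V : Submodule 𝕂 (Fin n → 𝕂)) : ℝ :=
  max (1 - (1 - ε) * sInf {t | ∃ x ∈ V, x ≠ 0 ∧ t = (normUS Θ x / normUS Θs x) ^ 2})
      ((1 + ε) * sSup {t | ∃ x ∈ V, x ≠ 0 ∧ t = (normUS Θ x / normUS Θs x) ^ 2} - 1)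

section aux
open scoped MatrixOrder
variable {n k : ℕ}

lemma norm2_nonneg' (x : Fin n → 𝕂) : 0 ≤ norm2 x := Real.sqrt_nonneg _

lemma re_ip2_self (x : Fin n → 𝕂) : RCLike.re (ip2 x x) = ∑ i, ‖x i‖ ^ 2 := by
  simp only [ip2, dotProduct, Pi.star_apply, RCLike.star_def, map_sum]
  refine Finset.sum_congr rfl fun i _ => ?_
  rw [RCLike.conj_mul, ← RCLike.ofReal_pow, RCLike.ofReal_re]

lemma norm2_eq_norm (x : Fin n → 𝕂) :
    norm2 x = ‖(WithLp.equiv 2 (Fin n → 𝕂)).symm x‖ := by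
  rw [norm2, re_ip2_self, EuclideanSpace.norm_eq]
  simp [WithLp.equiv_symm_apply]

lemma exists_opBound (N : Matrix (Fin k) (Fin n) 𝕂) :
    ∃ C : ℝ, 0 ≤ C ∧ ∀ y, norm2 (N *ᵥ y) ≤ C * norm2 y := by
  let f := LinearMap.toContinuousLinearMap (Matrix.toEuclideanLin N)
  refine ⟨‖f‖, norm_nonneg _, fun y => ?_⟩
  have h1 : norm2 (N *ᵥ y) = ‖f ((WithLp.equiv 2 (Fin n → 𝕂)).symm y)‖ := by
    rw [norm2_eq_norm]
    have : f ((WithLp.equiv 2 (Fin n → 𝕂)).symm y)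
        = Matrix.toEuclideanLin N ((WithLp.equiv 2 (Fin n → 𝕂)).symm y) := rfl
    rw [this]; rfl
  rw [h1, norm2_eq_norm]
  exact f.le_opNorm _

lemma ipU_self_eq (R : Matrix (Fin n) (Fin n) 𝕂) (hR : R.IsHermitian) (x : Fin n → 𝕂) :
    ipU R x x = star x ⬝ᵥ R *ᵥ x := by
  rw [ipU, ip2, star_mulVec, hR.eq, ← dotProduct_mulVec]

lemma normU_eq_sqrtMul (R : Matrix (Fin n) (Fin n) 𝕂) (hR : R.PosDef) (x : Fin n → 𝕂) :
    normU R x = norm2 (CFC.sqrt R *ᵥ x) := by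
  set S := CFC.sqrt R with hSdef
  have hS : Sᴴ = S := (CFC.sqrt_nonneg R).posSemidef.1
  have hSS : S * S = R := CFC.sqrt_mul_sqrt_self R (nonneg_iff_posSemidef.mpr hR.posSemidef)
  have key : ip2 (S *ᵥ x) (S *ᵥ x) = star x ⬝ᵥ R *ᵥ x := by
    rw [ip2, star_mulVec, hS, dotProduct_mulVec, vecMul_vecMul, hSS, ← dotProduct_mulVec]
  rw [normU, norm2, ipU_self_eq R hR.1, key]

lemma normU_pos (R : Matrix (Fin n) (Fin n) 𝕂) (hR : R.PosDef) {x : Fin n → 𝕂} (hx : x ≠ 0) :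
    0 < normU R x := by
  rw [normU]
  exact Real.sqrt_pos.mpr (by rw [ipU_self_eq R hR.1]; exact hR.re_dotProduct_pos hx)

lemma num_le_bound (R A : Matrix (Fin n) (Fin n) 𝕂) (hR : R.PosDef)
    (Θ : Matrix (Fin k) (Fin n) 𝕂) :
    ∃ C : ℝ, 0 ≤ C ∧ ∀ x, normDualS Θ R (A *ᵥ x) ≤ C * normU R x := by
  classical
  set S := CFC.sqrt R with hSdef
  have hSdet : IsUnit S.det := by
    have h2 : IsUnit (S.det * S.det) := by
      rw [← det_mul, CFC.sqrt_mul_sqrt_self R (nonneg_iff_posSemidef.mpr hR.posSemidef)]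
      exact hR.det_pos.ne'.isUnit
    exact isUnit_of_mul_isUnit_left h2
  obtain ⟨C, hC0, hC⟩ := exists_opBound (Θ * R⁻¹ * A * S⁻¹)
  refine ⟨C, hC0, fun x => ?_⟩
  have hmat : Θ * R⁻¹ * A * S⁻¹ * S = Θ * R⁻¹ * A := by
    rw [Matrix.mul_assoc (Θ * R⁻¹ * A) S⁻¹ S, nonsing_inv_mul S hSdet, Matrix.mul_one]
  have h1 : normDualS Θ R (A *ᵥ x) = norm2 ((Θ * R⁻¹ * A) *ᵥ x) := by
    simp only [normDualS, normUS, ipUS, norm2, mulVec_mulVec, Matrix.mul_assoc]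
  rw [h1, ← hmat, ← mulVec_mulVec]
  calc norm2 ((Θ * R⁻¹ * A * S⁻¹) *ᵥ (S *ᵥ x)) ≤ C * norm2 (S *ᵥ x) := hC _
    _ = C * normU R x := by rw [← normU_eq_sqrtMul R hR]

end aux

/-- Quasi-optimality of the sketched minimal residual projection. -/
theorem sketched_minres_quasi_optimality {𝕂 : Type*} [RCLike 𝕂] {n k : ℕ}
    (R A : Matrix (Fin n) (Fin n) 𝕂) (hR : R.PosDef) (hA : IsUnit A.det)
    (Θ : Matrix (Fin k) (Fin n) 𝕂)
    (b u : Fin n → 𝕂) (hu : u = A⁻¹ *ᵥ b)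
    (Ur : Submodule 𝕂 (Fin n → 𝕂)) (hUr : Ur ≠ ⊥)
    (ur : Fin n → 𝕂) (hur : ur ∈ Ur)
    (hmin : ∀ w ∈ Ur, normDualS Θ R (b - A *ᵥ ur) ≤ normDualS Θ R (b - A *ᵥ w))
    (ζΘ ιΘ : ℝ)
    (hζ : ζΘ = sInf (ratioSet (Submodule.span 𝕂 {u} ⊔ Ur)
        (fun x => normDualS Θ R (A *ᵥ x)) (normU R)))
    (hι : ιΘ = sSup (ratioSet (Submodule.span 𝕂 {u} ⊔ Ur)
        (fun x => normDualS Θ R (A *ᵥ x)) (normU R)))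
    (hζpos : 0 < ζΘ) :
    normU R (u - ur) ≤ (ιΘ / ζΘ) * distU R u Ur := by
  classical
  have hnumnn : ∀ y : Fin n → 𝕂, 0 ≤ normDualS Θ R y := fun y => Real.sqrt_nonneg _
  have hdennn : ∀ x : Fin n → 𝕂, 0 ≤ normU R x := fun x => Real.sqrt_nonneg _
  set V := Submodule.span 𝕂 {u} ⊔ Ur with hV
  set Srat := ratioSet V (fun x => normDualS Θ R (A *ᵥ x)) (normU R) with hSrat
  -- nonempty
  obtain ⟨x₀, hx₀U, hx₀⟩ := Submodule.ne_bot_iff Ur |>.mp hUr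
  have hne : Srat.Nonempty :=
    ⟨_, x₀, Submodule.mem_sup_right hx₀U, hx₀, rfl⟩
  have hbb : BddBelow Srat := by
    refine ⟨0, ?_⟩
    rintro t ⟨x, hxV, hx0, rfl⟩
    exact div_nonneg (hnumnn _) (hdennn _)
  obtain ⟨C, hC0, hC⟩ := num_le_bound R A hR Θ
  have hba : BddAbove Srat := by
    refine ⟨C, ?_⟩
    rintro t ⟨x, hxV, hx0, rfl⟩
    exact (div_le_iff₀ (normU_pos R hR hx0)).mpr (hC x)
  have hζι : ζΘ ≤ ιΘ := by rw [hζ, hι]; exact csInf_le_csSup hne hbb hba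
  have hq : 0 < ιΘ / ζΘ := div_pos (lt_of_lt_of_le hζpos hζι) hζpos
  -- key pointwise bounds
  have key1 : ∀ x ∈ V, ζΘ * normU R x ≤ normDualS Θ R (A *ᵥ x) := by
    intro x hx
    by_cases h0 : x = 0
    · subst h0
      simp [normU, normDualS, normUS, ipUS, ipU, ip2]
    · have hmem : normDualS Θ R (A *ᵥ x) / normU R x ∈ Srat := ⟨x, hx, h0, rfl⟩
      have hle : ζΘ ≤ normDualS Θ R (A *ᵥ x) / normU R x := hζ ▸ csInf_le hbb hmem
      exact (le_div_iff₀ (normU_pos R hR h0)).mp hle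
  have key2 : ∀ x ∈ V, normDualS Θ R (A *ᵥ x) ≤ ιΘ * normU R x := by
    intro x hx
    by_cases h0 : x = 0
    · subst h0
      simp only [mulVec_zero]
      have h1 : normDualS Θ R (0 : Fin n → 𝕂) = 0 := by
        simp [normDualS, normUS, ipUS, ip2]
      have h2 : normU R (0 : Fin n → 𝕂) = 0 := by
        simp [normU, ipU, ip2]
      rw [h1, h2, mul_zero]
    · have hmem : normDualS Θ R (A *ᵥ x) / normU R x ∈ Srat := ⟨x, hx, h0, rfl⟩
      have hle : normDualS Θ R (A *ᵥ x) / normU R x ≤ ιΘ := hι ▸ le_csSup hba hmem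
      exact (div_le_iff₀ (normU_pos R hR h0)).mp hle
  have hAu : A *ᵥ u = b := by
    rw [hu, mulVec_mulVec, mul_nonsing_inv A hA, one_mulVec]
  have huV : u ∈ V := Submodule.mem_sup_left (Submodule.mem_span_singleton_self u)
  have step : ∀ w ∈ Ur, normU R (u - ur) ≤ (ιΘ / ζΘ) * normU R (u - w) := by
    intro w hw
    have h1 : u - ur ∈ V := sub_mem huV (Submodule.mem_sup_right hur)
    have h2 : u - w ∈ V := sub_mem huV (Submodule.mem_sup_right hw)
    have e1 : A *ᵥ (u - ur) = b - A *ᵥ ur := by rw [mulVec_sub, hAu]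
    have e2 : A *ᵥ (u - w) = b - A *ᵥ w := by rw [mulVec_sub, hAu]
    have chain : ζΘ * normU R (u - ur) ≤ ιΘ * normU R (u - w) := by
      calc ζΘ * normU R (u - ur) ≤ normDualS Θ R (A *ᵥ (u - ur)) := key1 _ h1
        _ = normDualS Θ R (b - A *ᵥ ur) := by rw [e1]
        _ ≤ normDualS Θ R (b - A *ᵥ w) := hmin w hw
        _ = normDualS Θ R (A *ᵥ (u - w)) := by rw [e2]
        _ ≤ ιΘ * normU R (u - w) := key2 _ h2
    rw [div_mul_eq_mul_div, le_div_iff₀ hζpos, mul_comm (normU R (u - ur)) ζΘ]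
    exact chain
  -- pass to the infimum
  have hTne : {t | ∃ w ∈ Ur, t = normU R (u - w)}.Nonempty := ⟨_, ur, hur, rfl⟩
  have hinf : normU R (u - ur) / (ιΘ / ζΘ) ≤ distU R u Ur := by
    rw [distU]
    refine le_csInf hTne ?_
    rintro t ⟨w, hw, rfl⟩
    exact (div_le_iff₀ hq).mpr (by rw [mul_comm]; exact step w hw)
  have := (div_le_iff₀ hq).mp hinf
  rwa [mul_comm] at this


end
end

section
/- Preservation of exponential decay of dictionary-based widths under superposition: let c, C, γ, β, ν > 0 and suppose ⌈c m^ν⌉ ≥ m for every integer m ≥ 1. If σ_m(M^{(i)}; ⌈c m^ν⌉) ≤ C e^{−γ m^β} for every integer m ≥ 1 and every 1 ≤ i ≤ l, and each M^{(i)} is nonempty and bounded, then for every integer r ≥ 1 that is a multiple of l, σ_r(M; l·⌈c (r/l)^ν⌉) ≤ C l e^{−γ l^{−β} r^β}. -/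
open Matrix
open scoped ComplexOrder

noncomputable section

variable {𝕂 : Type*} [RCLike 𝕂]

section AuxWidth

variable {𝕂 : Type*} [RCLike 𝕂]

/-- Auxiliary linear map: `x ↦ S *ᵥ x` viewed in Euclidean space. -/
def sqMapAux {n : ℕ} (S : Matrix (Fin n) (Fin n) 𝕂) :
    (Fin n → 𝕂) →ₗ[𝕂] EuclideanSpace 𝕂 (Fin n) :=
  (WithLp.linearEquiv 2 𝕂 (Fin n → 𝕂)).symm.toLinearMap ∘ₗ S.mulVecLin

open scoped MatrixOrder Matrix.Norms.L2Operator in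
lemma normU_eq_norm_aux {n : ℕ} {R : Matrix (Fin n) (Fin n) 𝕂} (hR : R.PosDef)
    (x : Fin n → 𝕂) : normU R x = ‖sqMapAux (CFC.sqrt R) x‖ := by
  set S := CFC.sqrt R with hSdef
  have hSh : Sᴴ = S := (CFC.sqrt_nonneg R).posSemidef.isHermitian
  have hSS : S * S = R := CFC.sqrt_mul_sqrt_self R hR.posSemidef.nonneg
  have key : ipU R x x = ip2 (S *ᵥ x) (S *ᵥ x) := by
    unfold ipU ip2
    rw [Matrix.star_mulVec, Matrix.star_mulVec, hR.isHermitian.eq, hSh,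
      ← Matrix.dotProduct_mulVec, ← Matrix.dotProduct_mulVec, Matrix.mulVec_mulVec, hSS]
  rw [normU, key, EuclideanSpace.norm_eq]
  congr 1
  have hcoord : ∀ i, (sqMapAux S x) i = (S *ᵥ x) i := fun i => rfl
  rw [ip2, dotProduct, map_sum]
  refine Finset.sum_congr rfl fun i _ => ?_
  rw [hcoord, Pi.star_apply, RCLike.star_def, RCLike.conj_mul,
    ← RCLike.ofReal_pow, RCLike.ofReal_re]

lemma normU_nonneg_aux {n : ℕ} (R : Matrix (Fin n) (Fin n) 𝕂) (x : Fin n → 𝕂) :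
    0 ≤ normU R x := Real.sqrt_nonneg _

lemma normU_sum_le_aux {n : ℕ} {R : Matrix (Fin n) (Fin n) 𝕂} (hR : R.PosDef)
    {ι : Type*} (s : Finset ι) (f : ι → (Fin n → 𝕂)) :
    normU R (∑ i ∈ s, f i) ≤ ∑ i ∈ s, normU R (f i) := by
  simp only [normU_eq_norm_aux hR, map_sum]
  exact norm_sum_le _ _

lemma distU_set_nonempty {n : ℕ} (R : Matrix (Fin n) (Fin n) 𝕂) (v : Fin n → 𝕂)
    (W : Submodule 𝕂 (Fin n → 𝕂)) :
    {t | ∃ w ∈ W, t = normU R (v - w)}.Nonempty :=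
  ⟨normU R v, 0, W.zero_mem, by simp⟩

lemma distU_bddBelow {n : ℕ} (R : Matrix (Fin n) (Fin n) 𝕂) (v : Fin n → 𝕂)
    (W : Submodule 𝕂 (Fin n → 𝕂)) :
    BddBelow {t | ∃ w ∈ W, t = normU R (v - w)} :=
  ⟨0, fun t ⟨w, _, ht⟩ => ht ▸ normU_nonneg_aux R _⟩

lemma distU_nonneg {n : ℕ} (R : Matrix (Fin n) (Fin n) 𝕂) (v : Fin n → 𝕂)
    (W : Submodule 𝕂 (Fin n → 𝕂)) : 0 ≤ distU R v W :=
  Real.sInf_nonneg fun t ⟨w, _, ht⟩ => ht ▸ normU_nonneg_aux R _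

lemma distU_le {n : ℕ} (R : Matrix (Fin n) (Fin n) 𝕂) (v : Fin n → 𝕂)
    {W : Submodule 𝕂 (Fin n → 𝕂)} {w : Fin n → 𝕂} (hw : w ∈ W) :
    distU R v W ≤ normU R (v - w) :=
  csInf_le (distU_bddBelow R v W) ⟨w, hw, rfl⟩

lemma distU_le_normU {n : ℕ} (R : Matrix (Fin n) (Fin n) 𝕂) (v : Fin n → 𝕂)
    (W : Submodule 𝕂 (Fin n → 𝕂)) : distU R v W ≤ normU R v := by
  simpa using distU_le R v W.zero_mem

end AuxWidth

/-- Preservation of exponential decay of dictionary-based widths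
under superposition. -/
theorem dictionary_width_exponential_decay {𝕂 : Type*} [RCLike 𝕂] {n l : ℕ} (hl : 1 ≤ l)
    (R : Matrix (Fin n) (Fin n) 𝕂) (hR : R.PosDef)
    {P : Type*} (uu : Fin l → P → (Fin n → 𝕂))
    (hne : ∀ i, (Set.range (uu i)).Nonempty)
    (hbdd : ∀ i, ∃ C : ℝ, ∀ v ∈ Set.range (uu i), normU R v ≤ C)
    (c C γ β ν : ℝ) (hc : 0 < c) (hC : 0 < C) (hγ : 0 < γ) (hβ : 0 < β) (hν : 0 < ν)
    (hceil : ∀ m : ℕ, 1 ≤ m → m ≤ ⌈c * (m : ℝ) ^ ν⌉₊)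
    (hdecay : ∀ m : ℕ, 1 ≤ m → ∀ i,
      sigmaW R (Set.range (uu i)) m ⌈c * (m : ℝ) ^ ν⌉₊ ≤ C * Real.exp (-(γ * (m : ℝ) ^ β)))
    (r : ℕ) (hr : 1 ≤ r) (hdvd : l ∣ r) :
    sigmaW R {x | ∃ μ : P, x = ∑ i, uu i μ} r (l * ⌈c * ((r / l : ℕ) : ℝ) ^ ν⌉₊)
      ≤ C * (l : ℝ) * Real.exp (-(γ * (l : ℝ) ^ (-β) * (r : ℝ) ^ β)) := by
  classical
  set m := r / l with hm_def
  have hlr : l * m = r := Nat.mul_div_cancel' hdvd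
  have hm1 : 1 ≤ m := (Nat.one_le_div_iff (by omega)).mpr (Nat.le_of_dvd (by omega) hdvd)
  set K := ⌈c * (m : ℝ) ^ ν⌉₊ with hK_def
  have hmK : m ≤ K := hceil m hm1
  set E := C * Real.exp (-(γ * (m : ℝ) ^ β)) with hE_def
  have hEpos : 0 < E := mul_pos hC (Real.exp_pos _)
  have hl0 : (0 : ℝ) < l := by exact_mod_cast hl
  have hRHS : C * (l : ℝ) * Real.exp (-(γ * (l : ℝ) ^ (-β) * (r : ℝ) ^ β)) = l * E := by
    have hrlm : (r : ℝ) = (l : ℝ) * (m : ℝ) := by exact_mod_cast hlr.symm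
    have h1 : (l : ℝ) ^ (-β) * (r : ℝ) ^ β = (m : ℝ) ^ β := by
      rw [hrlm, Real.mul_rpow hl0.le (Nat.cast_nonneg m), Real.rpow_neg hl0.le, ← mul_assoc,
        inv_mul_cancel₀ (Real.rpow_pos_of_pos hl0 β).ne', one_mul]
    have h2 : γ * (l : ℝ) ^ (-β) * (r : ℝ) ^ β = γ * (m : ℝ) ^ β := by
      rw [mul_assoc, h1]
    rw [h2, hE_def]; ring
  rw [hRHS]
  rcases Nat.eq_zero_or_pos n with hn | hn
  · -- degenerate case `n = 0`
    subst hn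
    have hnorm : ∀ x : Fin 0 → 𝕂, normU R x = 0 := by
      intro x
      simp [normU, ipU, ip2, dotProduct]
    have hdist : ∀ (v : Fin 0 → 𝕂) (W : Submodule 𝕂 (Fin 0 → 𝕂)), distU R v W = 0 := by
      intro v W
      have hset : {t | ∃ w ∈ W, t = normU R (v - w)} = {0} := by
        ext t
        constructor
        · rintro ⟨w, _, rfl⟩; simp [hnorm]
        · rintro rfl; exact ⟨0, W.zero_mem, (hnorm _).symm⟩
      rw [distU, hset, csInf_singleton]
    have hT : sigmaW R {x | ∃ μ : P, x = ∑ i, uu i μ} r (l * K) ≤ 0 := by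
      rw [sigmaW]
      apply Real.sInf_nonpos
      rintro t ⟨D, hD, rfl⟩
      apply Real.sSup_le _ le_rfl
      rintro s ⟨v, hv, rfl⟩
      have hsub : {e | ∃ W ∈ LrD D r, e = distU R v W} ⊆ {0} := by
        rintro e ⟨W, _, rfl⟩
        exact hdist v W
      rcases Set.subset_singleton_iff_eq.mp hsub with h | h
      · rw [h, Real.sInf_empty]
      · rw [h, csInf_singleton]
    exact hT.trans (by positivity)
  · -- main case `0 < n`
    haveI : Nonempty (Fin n) := ⟨⟨0, hn⟩⟩
    haveI : Infinite 𝕂 := Infinite.of_injective (Nat.cast : ℕ → 𝕂) Nat.cast_injective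
    haveI : Infinite (Fin n → 𝕂) := Pi.infinite_of_right
    refine le_of_forall_pos_le_add fun δ hδ => ?_
    set ε := δ / (3 * l) with hε_def
    have hεpos : 0 < ε := by positivity
    -- Step 1: choose near-optimal dictionaries for each component
    have h1 : ∀ i : Fin l, ∃ D : Finset (Fin n → 𝕂), D.card = K ∧
        sSup {s | ∃ v ∈ Set.range (uu i),
          s = sInf {e | ∃ W ∈ LrD D m, e = distU R v W}} ≤ E + ε := by
      intro i
      have hσ := hdecay m hm1 i
      rw [← hK_def, ← hE_def, sigmaW] at hσ
      have hne2 : {t | ∃ D : Finset (Fin n → 𝕂), D.card = K ∧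
          t = sSup {s | ∃ v ∈ Set.range (uu i),
            s = sInf {e | ∃ W ∈ LrD D m, e = distU R v W}}}.Nonempty := by
        obtain ⟨D, -, hD⟩ := Infinite.exists_superset_card_eq (∅ : Finset (Fin n → 𝕂)) K
          (by simp)
        exact ⟨_, D, hD, rfl⟩
      obtain ⟨t, ht, hlt⟩ := Real.lt_sInf_add_pos hne2 hεpos
      obtain ⟨D, hDcard, rfl⟩ := ht
      exact ⟨D, hDcard, by linarith⟩
    choose DD hDDcard hDDsup using h1
    have hsub : ∀ i : Fin l, ∃ S : Finset (Fin n → 𝕂), S ⊆ DD i ∧ S.card = m := by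
      intro i
      obtain ⟨S, hS1, hS2⟩ := Finset.exists_subset_card_eq (s := DD i) (n := m) (by rw [hDDcard i]; exact hmK)
      exact ⟨S, hS1, hS2⟩
    have hBdd : ∀ i : Fin l, BddAbove {s | ∃ v ∈ Set.range (uu i),
        s = sInf {e | ∃ W ∈ LrD (DD i) m, e = distU R v W}} := by
      intro i
      obtain ⟨Ci, hCi⟩ := hbdd i
      refine ⟨Ci, ?_⟩
      rintro s ⟨v, hv, rfl⟩
      obtain ⟨S, hSsub, hScard⟩ := hsub i
      have hW : Submodule.span 𝕂 (S : Set (Fin n → 𝕂)) ∈ LrD (DD i) m :=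
        ⟨S, hSsub, hScard, rfl⟩
      calc sInf {e | ∃ W ∈ LrD (DD i) m, e = distU R v W}
          ≤ distU R v (Submodule.span 𝕂 (S : Set (Fin n → 𝕂))) :=
            csInf_le ⟨0, by rintro e ⟨W, _, rfl⟩; exact distU_nonneg R v W⟩ ⟨_, hW, rfl⟩
        _ ≤ normU R v := distU_le_normU R v _
        _ ≤ Ci := hCi v hv
    -- Step 2: the global dictionary
    set D0 := Finset.univ.biUnion DD with hD0def
    have hD0card : D0.card ≤ l * K := by
      calc D0.card ≤ ∑ i, (DD i).card := Finset.card_biUnion_le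
        _ = l * K := by simp [hDDcard, mul_comm]
    obtain ⟨D, hD0D, hDcard⟩ := Infinite.exists_superset_card_eq D0 (l * K) hD0card
    rw [sigmaW]
    have hbddBelow : BddBelow {t | ∃ D' : Finset (Fin n → 𝕂), D'.card = l * K ∧
        t = sSup {s | ∃ v ∈ {x | ∃ μ : P, x = ∑ i, uu i μ},
          s = sInf {e | ∃ W ∈ LrD D' r, e = distU R v W}}} := by
      refine ⟨0, ?_⟩
      rintro t ⟨D', hD', rfl⟩
      apply Real.sSup_nonneg
      rintro s ⟨v, hv, rfl⟩
      apply Real.sInf_nonneg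
      rintro e ⟨W, hW, rfl⟩
      exact distU_nonneg R v W
    refine csInf_le_of_le hbddBelow ⟨D, hDcard, rfl⟩ ?_
    apply Real.sSup_le _ (by positivity)
    rintro s ⟨v, ⟨μ, rfl⟩, rfl⟩
    -- Step 3: for each component, a good subspace and approximant
    have h2 : ∀ i : Fin l, ∃ S : Finset (Fin n → 𝕂), S ⊆ DD i ∧ S.card = m ∧
        ∃ w ∈ Submodule.span 𝕂 (S : Set (Fin n → 𝕂)),
          normU R (uu i μ - w) ≤ E + 3 * ε := by
      intro i
      have hmem : sInf {e | ∃ W ∈ LrD (DD i) m, e = distU R (uu i μ) W} ≤ E + ε :=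
        le_trans (le_csSup (hBdd i) ⟨uu i μ, ⟨μ, rfl⟩, rfl⟩) (hDDsup i)
      obtain ⟨S0, hS0sub, hS0card⟩ := hsub i
      have hne3 : {e | ∃ W ∈ LrD (DD i) m, e = distU R (uu i μ) W}.Nonempty :=
        ⟨_, ⟨Submodule.span 𝕂 (S0 : Set (Fin n → 𝕂)), ⟨S0, hS0sub, hS0card, rfl⟩, rfl⟩⟩
      obtain ⟨e, he, helt⟩ := Real.lt_sInf_add_pos hne3 hεpos
      obtain ⟨W, ⟨S, hSsub, hScard, rfl⟩, rfl⟩ := he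
      obtain ⟨t, ht, htlt⟩ := Real.lt_sInf_add_pos
        (distU_set_nonempty R (uu i μ) (Submodule.span 𝕂 (S : Set (Fin n → 𝕂)))) hεpos
      obtain ⟨w, hw, rfl⟩ := ht
      have hd : sInf {t | ∃ w ∈ Submodule.span 𝕂 (S : Set (Fin n → 𝕂)),
          t = normU R (uu i μ - w)} = distU R (uu i μ) (Submodule.span 𝕂 (S : Set (Fin n → 𝕂))) :=
        rfl
      rw [hd] at htlt
      exact ⟨S, hSsub, hScard, w, hw, by linarith⟩
    choose SS hSSsub hSScard ww hwmem hwbound using h2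
    set S0 := Finset.univ.biUnion SS with hS0def
    have hS0D : S0 ⊆ D := by
      intro x hx
      obtain ⟨i, -, hxi⟩ := Finset.mem_biUnion.mp hx
      exact hD0D (Finset.mem_biUnion.mpr ⟨i, Finset.mem_univ i, hSSsub i hxi⟩)
    have hS0card : S0.card ≤ r := by
      calc S0.card ≤ ∑ i, (SS i).card := Finset.card_biUnion_le
        _ = l * m := by simp [hSScard, mul_comm]
        _ = r := hlr
    have hrD : r ≤ D.card := by
      rw [hDcard, ← hlr]
      exact Nat.mul_le_mul_left l hmK
    obtain ⟨S, hS0S, hSD, hScard⟩ := Finset.exists_subsuperset_card_eq hS0D hS0card hrD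
    have hWmem : Submodule.span 𝕂 (S : Set (Fin n → 𝕂)) ∈ LrD D r := ⟨S, hSD, hScard, rfl⟩
    have hwsum : (∑ i, ww i) ∈ Submodule.span 𝕂 (S : Set (Fin n → 𝕂)) := by
      apply Submodule.sum_mem
      intro i _
      refine Submodule.span_mono ?_ (hwmem i)
      intro x hx
      simp only [Finset.coe_subset, Finset.mem_coe] at *
      exact hS0S (Finset.mem_biUnion.mpr ⟨i, Finset.mem_univ i, hx⟩)
    have hdistv : distU R (∑ i, uu i μ) (Submodule.span 𝕂 (S : Set (Fin n → 𝕂)))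
        ≤ l * E + δ := by
      calc distU R (∑ i, uu i μ) (Submodule.span 𝕂 (S : Set (Fin n → 𝕂)))
          ≤ normU R (∑ i, uu i μ - ∑ i, ww i) := distU_le R _ hwsum
        _ = normU R (∑ i, (uu i μ - ww i)) := by rw [Finset.sum_sub_distrib]
        _ ≤ ∑ i, normU R (uu i μ - ww i) := normU_sum_le_aux hR _ _
        _ ≤ ∑ _i : Fin l, (E + 3 * ε) := Finset.sum_le_sum fun i _ => hwbound i
        _ = l * (E + 3 * ε) := by
            rw [Finset.sum_const, Finset.card_univ, Fintype.card_fin, nsmul_eq_mul]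
        _ = l * E + δ := by
            have h3 : (l : ℝ) * (3 * ε) = δ := by
              rw [hε_def]; field_simp
            rw [mul_add, h3]
    refine le_trans (csInf_le ?_ ⟨_, hWmem, rfl⟩) hdistv
    exact ⟨0, by rintro e ⟨W, -, rfl⟩; exact distU_nonneg R _ W⟩

end
end
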